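/- Let Φ ∈ ℂ^{K×N}, let S be a positive integer with 2S ≤ N, and let δ_{2S} ≥ 0 be a constant such that (1−δ_{2S})·‖θ‖₂² ≤ ‖Φθ‖₂² ≤ (1+δ_{2S})·‖θ‖₂² for every θ ∈ ℂ^N with at most 2S nonzero entries. Assume δ_{2S} < √2 − 1. Let α ∈ ℂ^K, ε₂ ≥ 0, and let θ* ∈ ℂ^N satisfy ‖Φθ* − α‖₂ ≤ ε₂. Suppose θ₁ ∈ ℂ^N minimizes ‖θ‖₁ over all θ ∈ ℂ^N with ‖Φθ − α‖₂ ≤ ε₂. Let θ*_{[S]} denote the vector obtained from θ* by setting all but its S largest-magnitude components to 0, and set ε₁ = ‖θ* − θ*_{[S]}‖₁. Then ‖θ₁ − θ*‖₂ ≤ C₁·ε₁/√S + C₂·ε₂, where C₁ = 2·(1 + (√2−1)·δ_{2S})/(1 − (√2+1)·δ_{2S}) and C₂ = 4·√(1+δ_{2S})/(1 − (√2+1)·δ_{2S}). -/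

import Mathlib

/-!
Candès' argument. Put `h = θ₁ - θ*` and let `Λ` carry the `S` retained entries of `θ*`.
Minimality of `‖θ₁‖₁` puts `h` in the cone `‖h_{Λᶜ}‖₁ ≤ ‖h_Λ‖₁ + 2ε₁`, and feasibility of both
vectors gives `‖Φh‖₂ ≤ 2ε₂`. Cut `Λᶜ` into blocks `T₁, T₂, …` of `S` indices in decreasing order
of `|hᵢ|`. Every entry on `T_{j+1}` is at most the mean of `|h|` on `T_j`, so
`∑_{j ≥ 2} ‖h_{T_j}‖₂ ≤ ‖h_{Λᶜ}‖₁ / √S ≤ ‖h_{Λ ∪ T₁}‖₂ + 2ε₁ / √S`. Expanding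
`‖Φ h_{Λ ∪ T₁}‖₂² = ⟨Φ h_{Λ ∪ T₁}, Φ h⟩ - ∑_{j ≥ 2} ⟨Φ h_{Λ ∪ T₁}, Φ h_{T_j}⟩` and bounding each
cross term by `δ ‖·‖ ‖·‖` (polarisation of the RIP on disjointly supported sparse vectors) gives
`(1 - (√2 + 1)δ) ‖h_{Λ ∪ T₁}‖₂ ≤ 2√(1 + δ) ε₂ + 2√2 δ ε₁ / √S`; the triangle inequality over the
blocks then bounds `‖h‖₂`.
-/

namespace List

variable {α : Type*} (l : List α) (S : ℕ)

def chunk (j : ℕ) : List α := (l.drop (j * S)).take S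

theorem drop_mul_eq_chunk_append (j : ℕ) :
    l.drop (j * S) = l.chunk S j ++ l.drop ((j + 1) * S) := by
  conv_lhs => rw [← take_append_drop S (l.drop (j * S))]
  rw [drop_drop, chunk, add_mul, one_mul]

theorem chunk_sublist_drop {i j : ℕ} (hij : i ≤ j) : l.chunk S j <+ l.drop (i * S) :=
  (take_sublist _ _).trans (drop_sublist_drop_left l (Nat.mul_le_mul_right S hij))

theorem chunk_sublist (j : ℕ) : l.chunk S j <+ l :=
  (take_sublist _ _).trans (drop_sublist _ _)

theorem length_chunk_le (j : ℕ) : (l.chunk S j).length ≤ S := by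
  simp [chunk]

theorem length_chunk_of_ne_nil {j : ℕ} (h : l.chunk S (j + 1) ≠ []) : (l.chunk S j).length = S := by
  simp only [chunk, ne_eq, take_eq_nil_iff, drop_eq_nil_iff, not_or, not_le] at h
  simp only [chunk, length_take, length_drop]
  rw [add_mul] at h
  omega

theorem Pairwise.rel_of_mem_chunk {R : α → α → Prop} {l : List α} (hl : l.Pairwise R) {i j : ℕ}
    (hij : i < j) {a b : α} (ha : a ∈ l.chunk S i) (hb : b ∈ l.chunk S j) : R a b := by
  have hl' := (hl.sublist (drop_sublist (i * S) l))
  rw [drop_mul_eq_chunk_append, pairwise_append] at hl'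
  exact hl'.2.2 a ha b ((chunk_sublist_drop l S hij).subset hb)

theorem flatMap_chunk_range (M : ℕ) : (range M).flatMap (l.chunk S) = l.take (M * S) := by
  induction M with
  | zero => simp
  | succ M ih => rw [range_succ, flatMap_append, ih, add_mul, one_mul, take_add]; simp [chunk]

end List

open Finset Function

theorem Finset.sum_sq_mul_card_le_sq_sum {ι : Type*} {f : ι → ℝ} {A B : Finset ι}
    (hBA : #B ≤ #A) (hf : ∀ b ∈ B, 0 ≤ f b) (hdom : ∀ a ∈ A, ∀ b ∈ B, f b ≤ f a) :
    (∑ b ∈ B, f b ^ 2) * #A ≤ (∑ a ∈ A, f a) ^ 2 := by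
  rcases B.eq_empty_or_nonempty with rfl | hB
  · simp only [sum_empty, zero_mul]; positivity
  have hA : (0 : ℝ) < #A := by exact_mod_cast hB.card_pos.trans_le hBA
  have hterm : ∀ b ∈ B, (#A * f b) ^ 2 ≤ (∑ a ∈ A, f a) ^ 2 := fun b hb =>
    pow_le_pow_left₀ (mul_nonneg (Nat.cast_nonneg _) (hf b hb))
      (by simpa using card_nsmul_le_sum A f (f b) (hdom · · b hb)) 2
  have hsum : (∑ b ∈ B, f b ^ 2) * #A ^ 2 ≤ #B * (∑ a ∈ A, f a) ^ 2 := by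
    simpa [mul_pow, mul_comm, ← sum_mul] using sum_le_sum hterm
  have hBA' : (#B : ℝ) ≤ #A := by exact_mod_cast hBA
  nlinarith [sq_nonneg (∑ a ∈ A, f a)]

noncomputable section

namespace CompressedSensing

section Indicator

variable {𝕜 ι : Type*} [RCLike 𝕜]

/-- The vector `x_T` of the header. -/
def indicator (T : Finset ι) (x : EuclideanSpace 𝕜 ι) : EuclideanSpace 𝕜 ι :=
  WithLp.toLp 2 ((T : Set ι).indicator x)

theorem indicator_apply (T : Finset ι) (x : EuclideanSpace 𝕜 ι) (i : ι) :
    indicator T x i = (T : Set ι).indicator x i := rfl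

theorem support_indicator_subset (T : Finset ι) (x : EuclideanSpace 𝕜 ι) :
    support (indicator T x) ⊆ T :=
  Set.support_indicator_subset

variable [DecidableEq ι]

theorem indicator_union {T T' : Finset ι} (h : Disjoint T T') (x : EuclideanSpace 𝕜 ι) :
    indicator (T ∪ T') x = indicator T x + indicator T' x := by
  ext i
  simp [indicator_apply, Set.indicator_union_of_disjoint (Finset.disjoint_coe.mpr h)]

theorem indicator_biUnion {κ : Type*} (s : Finset κ) {T : κ → Finset ι}
    (h : (s : Set κ).PairwiseDisjoint T) (x : EuclideanSpace 𝕜 ι) :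
    indicator (s.biUnion T) x = ∑ j ∈ s, indicator (T j) x := by
  ext i
  have hcoe : ((s.biUnion T : Finset ι) : Set ι) = ⋃ j ∈ s, (T j : Set ι) := by simp
  rw [indicator_apply, hcoe, indicator_biUnion_apply s _
    fun a ha b hb hab => disjoint_coe.mpr (h ha hb hab), WithLp.ofLp_sum, Finset.sum_apply]
  rfl

theorem support_add_subset_union {x y : EuclideanSpace 𝕜 ι} {T T' : Finset ι} (hx : support x ⊆ T)
    (hy : support y ⊆ T') : support (x + y) ⊆ ↑(T ∪ T') := by
  rw [WithLp.ofLp_add, coe_union]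
  exact (support_add _ _).trans (Set.union_subset_union hx hy)

variable [Fintype ι]

theorem indicator_add_indicator_compl (T : Finset ι) (x : EuclideanSpace 𝕜 ι) :
    indicator T x + indicator Tᶜ x = x := by
  ext i
  simp only [WithLp.ofLp_add, Pi.add_apply, indicator_apply, coe_compl]
  exact congrFun (Set.indicator_self_add_compl _ _) i

theorem norm_indicator_sq (T : Finset ι) (x : EuclideanSpace 𝕜 ι) :
    ‖indicator T x‖ ^ 2 = ∑ i ∈ T, ‖x i‖ ^ 2 := by
  rw [EuclideanSpace.norm_sq_eq, ← sum_indicator_subset _ (subset_univ T)]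
  refine sum_congr rfl fun i _ => ?_
  by_cases hi : i ∈ T <;> simp [indicator_apply, hi]

theorem norm_indicator_mono {T T' : Finset ι} (h : T ⊆ T') (x : EuclideanSpace 𝕜 ι) :
    ‖indicator T x‖ ≤ ‖indicator T' x‖ := by
  refine (pow_le_pow_iff_left₀ (norm_nonneg _) (norm_nonneg _) two_ne_zero).mp ?_
  rw [norm_indicator_sq, norm_indicator_sq]
  exact sum_le_sum_of_subset_of_nonneg h fun _ _ _ => by positivity

theorem sum_norm_le_sqrt_card_mul_norm_indicator (T : Finset ι) (x : EuclideanSpace 𝕜 ι) :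
    ∑ i ∈ T, ‖x i‖ ≤ √(#T : ℝ) * ‖indicator T x‖ := by
  refine (pow_le_pow_iff_left₀ (by positivity) (by positivity) two_ne_zero).mp ?_
  rw [mul_pow, Real.sq_sqrt (Nat.cast_nonneg _), norm_indicator_sq]
  exact sq_sum_le_card_mul_sum_sq

end Indicator

section Blocks

variable {𝕜 ι : Type*} [RCLike 𝕜] (x : EuclideanSpace 𝕜 ι) (U : Finset ι) (S : ℕ)

def decreasingList : List ι :=
  U.toList.mergeSort fun a b => decide (‖x b‖ ≤ ‖x a‖)

theorem nodup_decreasingList : (decreasingList x U).Nodup :=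
  (List.mergeSort_perm _ _).nodup_iff.mpr U.nodup_toList

theorem mem_decreasingList {i : ι} : i ∈ decreasingList x U ↔ i ∈ U := by
  simp [decreasingList]

theorem pairwise_decreasingList : (decreasingList x U).Pairwise fun a b => ‖x b‖ ≤ ‖x a‖ := by
  simpa [decreasingList] using List.pairwise_mergeSort (le := fun a b => decide (‖x b‖ ≤ ‖x a‖))
    (fun a b c hab hbc => by simp only [decide_eq_true_eq] at *; exact hbc.trans hab)
    (fun a b => by simpa using le_total _ _) U.toList

variable [DecidableEq ι]

/-- The header's `T_{j+1}`. -/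
def block (j : ℕ) : Finset ι := ((decreasingList x U).chunk S j).toFinset

theorem card_block_le (j : ℕ) : #(block x U S j) ≤ S :=
  (List.toFinset_card_le _).trans (List.length_chunk_le _ _ _)

theorem block_subset (j : ℕ) : block x U S j ⊆ U := fun i hi => by
  rw [block, List.mem_toFinset] at hi
  exact (mem_decreasingList x U).mp ((List.chunk_sublist _ S j).subset hi)

theorem pairwise_disjoint_block : Pairwise (Disjoint on block x U S) := by
  have key : ∀ i j, i < j → Disjoint (block x U S i) (block x U S j) := fun i j hij =>
    disjoint_left.mpr fun a ha hb => by
      simp only [block, List.mem_toFinset] at ha hb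
      exact (List.nodup_iff_pairwise_ne.mp (nodup_decreasingList x U)).rel_of_mem_chunk S hij ha hb
        rfl
  intro i j hij
  rcases hij.lt_or_gt with h | h
  exacts [key i j h, (key j i h).symm]

theorem biUnion_range_block {M : ℕ} (hM : #U ≤ M * S) : (range M).biUnion (block x U S) = U := by
  ext i
  have hlen : (decreasingList x U).length ≤ M * S := by simpa [decreasingList] using hM
  simp only [mem_biUnion, mem_range, block, List.mem_toFinset]
  rw [← mem_decreasingList x U]
  conv_rhs => rw [← (List.take_eq_self_iff _).mpr hlen, ← List.flatMap_chunk_range]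
  simp

variable [Fintype ι]

theorem norm_indicator_block_succ_mul_sqrt_le (j : ℕ) :
    ‖indicator (block x U S (j + 1)) x‖ * √(S : ℝ) ≤ ∑ i ∈ block x U S j, ‖x i‖ := by
  rcases eq_or_ne ((decreasingList x U).chunk S (j + 1)) [] with hnil | hne
  · have h0 : ‖indicator (block x U S (j + 1)) x‖ = 0 := by
      simpa [block, hnil] using norm_indicator_sq (block x U S (j + 1)) x
    rw [h0, zero_mul]
    positivity
  have hcard : #(block x U S j) = S := by
    rw [block, List.toFinset_card_of_nodup
      ((nodup_decreasingList x U).sublist (List.chunk_sublist _ S j)), List.length_chunk_of_ne_nil _ _ hne]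
  have hdom : ∀ a ∈ block x U S j, ∀ b ∈ block x U S (j + 1), ‖x b‖ ≤ ‖x a‖ := fun a ha b hb => by
    simp only [block, List.mem_toFinset] at ha hb
    exact (pairwise_decreasingList x U).rel_of_mem_chunk S j.lt_succ_self ha hb
  have hsq := sum_sq_mul_card_le_sq_sum (by rw [hcard]; exact card_block_le x U S (j + 1))
    (fun _ _ => norm_nonneg _) hdom
  rw [hcard, ← norm_indicator_sq] at hsq
  refine (pow_le_pow_iff_left₀ (by positivity) (by positivity) two_ne_zero).mp ?_
  rwa [mul_pow, Real.sq_sqrt (Nat.cast_nonneg _)]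

theorem sum_norm_indicator_block_succ_le (hS : 0 < S) (M : ℕ) :
    ∑ j ∈ range M, ‖indicator (block x U S (j + 1)) x‖ ≤ (∑ i ∈ U, ‖x i‖) / √(S : ℝ) := by
  have hS' : 0 < √(S : ℝ) := Real.sqrt_pos.mpr (by exact_mod_cast hS)
  calc ∑ j ∈ range M, ‖indicator (block x U S (j + 1)) x‖
      ≤ ∑ j ∈ range M, (∑ i ∈ block x U S j, ‖x i‖) / √(S : ℝ) :=
        sum_le_sum fun j _ => (le_div_iff₀ hS').mpr (norm_indicator_block_succ_mul_sqrt_le x U S j)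
    _ = (∑ i ∈ (range M).biUnion (block x U S), ‖x i‖) / √(S : ℝ) := by
        rw [sum_biUnion ((pairwise_disjoint_block x U S).set_pairwise _), sum_div]
    _ ≤ (∑ i ∈ U, ‖x i‖) / √(S : ℝ) := by
        gcongr ?_ / _
        exact sum_le_sum_of_subset_of_nonneg (biUnion_subset.mpr fun j _ => block_subset x U S j)
          fun i _ _ => norm_nonneg (x i)

theorem eq_indicator_add_sum_indicator_block (hS : 0 < S) (Λ : Finset ι) :
    x = indicator Λ x + indicator (block x Λᶜ S 0) x +
      ∑ j ∈ range #Λᶜ, indicator (block x Λᶜ S (j + 1)) x := by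
  rw [add_assoc, add_comm (indicator (block x Λᶜ S 0) x),
    ← sum_range_succ' (fun j => indicator (block x Λᶜ S j) x),
    ← indicator_biUnion _ ((pairwise_disjoint_block x Λᶜ S).set_pairwise _),
    biUnion_range_block x Λᶜ S (by nlinarith), indicator_add_indicator_compl]

theorem sum_norm_indicator_block_succ_le_of_cone (hS : 0 < S) {Λ : Finset ι} (hΛ : #Λ ≤ S)
    {ε : ℝ} (hcone : ∑ i ∈ Λᶜ, ‖x i‖ ≤ ∑ i ∈ Λ, ‖x i‖ + 2 * ε) (M : ℕ) :
    ∑ j ∈ range M, ‖indicator (block x Λᶜ S (j + 1)) x‖ ≤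
      ‖indicator Λ x + indicator (block x Λᶜ S 0) x‖ + 2 * (ε / √(S : ℝ)) := by
  have hS' : 0 < √(S : ℝ) := Real.sqrt_pos.mpr (by exact_mod_cast hS)
  have hΛ' : ∑ i ∈ Λ, ‖x i‖ ≤ √(S : ℝ) * ‖indicator Λ x‖ :=
    (sum_norm_le_sqrt_card_mul_norm_indicator Λ x).trans (by gcongr)
  calc ∑ j ∈ range M, ‖indicator (block x Λᶜ S (j + 1)) x‖
      ≤ (∑ i ∈ Λᶜ, ‖x i‖) / √(S : ℝ) := sum_norm_indicator_block_succ_le x Λᶜ S hS M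
    _ ≤ (√(S : ℝ) * ‖indicator Λ x‖ + 2 * ε) / √(S : ℝ) := by gcongr; linarith
    _ = ‖indicator Λ x‖ + 2 * (ε / √(S : ℝ)) := by field_simp
    _ ≤ ‖indicator Λ x + indicator (block x Λᶜ S 0) x‖ + 2 * (ε / √(S : ℝ)) := by
      rw [← indicator_union (disjoint_compl_right.mono_right (block_subset x Λᶜ S 0))]
      gcongr
      exact norm_indicator_mono subset_union_left x

end Blocks

section RIP

variable {𝕜 ι F : Type*} [RCLike 𝕜] [Fintype ι] [NormedAddCommGroup F] [InnerProductSpace 𝕜 F]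

theorem inner_eq_zero_of_disjoint_support {x y : EuclideanSpace 𝕜 ι}
    (h : Disjoint (support x) (support y)) : inner 𝕜 x y = 0 := by
  rw [PiLp.inner_apply]
  refine sum_eq_zero fun i _ => ?_
  by_cases hx : x i = 0
  · simp [hx]
  · simp [notMem_support.mp (Set.disjoint_left.mp h (mem_support.mpr hx))]

theorem norm_add_norm_le_sqrt_two_mul {E : Type*} [NormedAddCommGroup E] [InnerProductSpace 𝕜 E]
    {x y : E} (h : inner 𝕜 x y = 0) : ‖x‖ + ‖y‖ ≤ √2 * ‖x + y‖ := by
  refine (pow_le_pow_iff_left₀ (by positivity) (by positivity) two_ne_zero).mp ?_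
  rw [mul_pow, Real.sq_sqrt zero_le_two, sq ‖x + y‖,
    norm_add_sq_eq_norm_sq_add_norm_sq_of_inner_eq_zero x y h]
  nlinarith [sq_nonneg (‖x‖ - ‖y‖)]

/-- `δ` bounds the restricted isometry constant `δ_s` of `A` from above; the paper's `δ_s` is the
least such `δ`. -/
def IsRIP (A : EuclideanSpace 𝕜 ι →ₗ[𝕜] F) (s : ℕ) (δ : ℝ) : Prop :=
  ∀ x : EuclideanSpace 𝕜 ι, #{i | x i ≠ 0} ≤ s →
    (1 - δ) * ‖x‖ ^ 2 ≤ ‖A x‖ ^ 2 ∧ ‖A x‖ ^ 2 ≤ (1 + δ) * ‖x‖ ^ 2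

variable {A : EuclideanSpace 𝕜 ι →ₗ[𝕜] F} {s : ℕ} {δ : ℝ}

theorem IsRIP.of_support_subset (hA : IsRIP A s δ) {T : Finset ι} (hT : #T ≤ s)
    {x : EuclideanSpace 𝕜 ι} (hx : support x ⊆ T) :
    (1 - δ) * ‖x‖ ^ 2 ≤ ‖A x‖ ^ 2 ∧ ‖A x‖ ^ 2 ≤ (1 + δ) * ‖x‖ ^ 2 :=
  hA x <| (card_le_card fun i hi => hx (by simpa using hi)).trans hT

theorem IsRIP.re_inner_le_half_mul (hA : IsRIP A s δ) {T T' : Finset ι} (hTT' : Disjoint T T')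
    (hs : #T + #T' ≤ s) {x y : EuclideanSpace 𝕜 ι} (hx : support x ⊆ T) (hy : support y ⊆ T') :
    RCLike.re (inner 𝕜 (A x) (A y)) ≤ δ / 2 * (‖x‖ ^ 2 + ‖y‖ ^ 2) := by
  classical
  have hdisj : Disjoint (support x) (support y) :=
    Set.disjoint_of_subset hx hy (disjoint_coe.mpr hTT')
  have hcard : #(T ∪ T') ≤ s := (card_union_of_disjoint hTT').le.trans hs
  have hadd := norm_add_sq_eq_norm_sq_add_norm_sq_of_inner_eq_zero x y
    (inner_eq_zero_of_disjoint_support hdisj)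
  have hsub : ‖x - y‖ = ‖x + y‖ :=
    norm_sub_eq_norm_add (inner_eq_zero_of_disjoint_support hdisj.symm)
  have hup := (hA.of_support_subset hcard (support_add_subset_union hx hy)).2
  have hlow := (hA.of_support_subset hcard
    (support_add_subset_union hx (y := -y) (by rwa [WithLp.ofLp_neg, support_neg]))).1
  rw [← sq, ← sq, ← sq] at hadd
  rw [← sub_eq_add_neg, hsub, hadd] at hlow
  rw [hadd] at hup
  rw [re_inner_eq_norm_add_mul_self_sub_norm_sub_mul_self_div_four, ← map_add, ← map_sub, ← sq,
    ← sq]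
  linarith

theorem IsRIP.re_inner_le (hA : IsRIP A s δ) {T T' : Finset ι} (hTT' : Disjoint T T')
    (hs : #T + #T' ≤ s) {x y : EuclideanSpace 𝕜 ι} (hx : support x ⊆ T) (hy : support y ⊆ T') :
    RCLike.re (inner 𝕜 (A x) (A y)) ≤ δ * ‖x‖ * ‖y‖ := by
  rcases eq_or_ne x 0 with rfl | hx0
  · simp
  rcases eq_or_ne y 0 with rfl | hy0
  · simp
  -- for unit vectors the half-sum bound is exactly `δ`
  have key := hA.re_inner_le_half_mul hTT' hs (x := (‖x‖ : 𝕜)⁻¹ • x) (y := (‖y‖ : 𝕜)⁻¹ • y)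
    (by rw [WithLp.ofLp_smul]; exact (support_const_smul_subset _ _).trans hx)
    (by rw [WithLp.ofLp_smul]; exact (support_const_smul_subset _ _).trans hy)
  have hxpos : 0 < ‖x‖ := norm_pos_iff.mpr hx0
  have hypos : 0 < ‖y‖ := norm_pos_iff.mpr hy0
  rw [map_smul, map_smul, inner_smul_left, inner_smul_right, norm_smul_inv_norm hx0,
    norm_smul_inv_norm hy0, ← RCLike.ofReal_inv, ← RCLike.ofReal_inv, RCLike.conj_ofReal,
    RCLike.re_ofReal_mul, RCLike.re_ofReal_mul] at key
  calc RCLike.re (inner 𝕜 (A x) (A y))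
      = ‖x‖ * ‖y‖ * (‖x‖⁻¹ * (‖y‖⁻¹ * RCLike.re (inner 𝕜 (A x) (A y)))) := by field_simp
    _ ≤ ‖x‖ * ‖y‖ * (δ / 2 * (1 ^ 2 + 1 ^ 2)) := by gcongr
    _ = δ * ‖x‖ * ‖y‖ := by ring

variable {S : ℕ} {κ : Type*} {T₀ T₁ : Finset ι} {T : κ → Finset ι}
  {x₀ x₁ : EuclideanSpace 𝕜 ι} {y : κ → EuclideanSpace 𝕜 ι}

theorem IsRIP.neg_re_inner_sum_le (hA : IsRIP A (2 * S) δ) (h₀ : #T₀ ≤ S) (h₁ : #T₁ ≤ S)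
    (hT : ∀ j, #(T j) ≤ S) (h₀T : ∀ j, Disjoint T₀ (T j)) (h₁T : ∀ j, Disjoint T₁ (T j))
    (hx₀ : support x₀ ⊆ T₀) (hx₁ : support x₁ ⊆ T₁) (hy : ∀ j, support (y j) ⊆ T j) (J : Finset κ) :
    -RCLike.re (inner 𝕜 (A (x₀ + x₁)) (A (∑ j ∈ J, y j))) ≤
      δ * (‖x₀‖ + ‖x₁‖) * ∑ j ∈ J, ‖y j‖ := by
  rw [map_sum, inner_sum, map_sum, ← sum_neg_distrib, mul_sum]
  refine sum_le_sum fun j _ => ?_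
  have hneg : support (-y j) ⊆ T j := by rw [WithLp.ofLp_neg, support_neg]; exact hy j
  have hsplit : -RCLike.re (inner 𝕜 (A (x₀ + x₁)) (A (y j))) =
      RCLike.re (inner 𝕜 (A x₀) (A (-y j))) + RCLike.re (inner 𝕜 (A x₁) (A (-y j))) := by
    simp only [map_add, map_neg, inner_add_left, inner_neg_right, map_neg, neg_add]
  calc -RCLike.re (inner 𝕜 (A (x₀ + x₁)) (A (y j)))
      ≤ δ * ‖x₀‖ * ‖-y j‖ + δ * ‖x₁‖ * ‖-y j‖ := hsplit ▸ add_le_add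
        (hA.re_inner_le (h₀T j) (by linarith [hT j]) hx₀ hneg)
        (hA.re_inner_le (h₁T j) (by linarith [hT j]) hx₁ hneg)
    _ = δ * (‖x₀‖ + ‖x₁‖) * ‖y j‖ := by rw [norm_neg]; ring

theorem IsRIP.one_sub_mul_norm_add_le (hA : IsRIP A (2 * S) δ) (hδ : 0 ≤ δ) (h₀ : #T₀ ≤ S)
    (h₁ : #T₁ ≤ S) (hT : ∀ j, #(T j) ≤ S) (h₀₁ : Disjoint T₀ T₁) (h₀T : ∀ j, Disjoint T₀ (T j))
    (h₁T : ∀ j, Disjoint T₁ (T j)) (hx₀ : support x₀ ⊆ T₀) (hx₁ : support x₁ ⊆ T₁)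
    (hy : ∀ j, support (y j) ⊆ T j) (J : Finset κ) :
    (1 - δ) * ‖x₀ + x₁‖ ≤
      √(1 + δ) * ‖A (x₀ + x₁ + ∑ j ∈ J, y j)‖ + √2 * δ * ∑ j ∈ J, ‖y j‖ := by
  classical
  have hneg := hA.neg_re_inner_sum_le h₀ h₁ hT h₀T h₁T hx₀ hx₁ hy J
  have hx₀₁ : ‖x₀‖ + ‖x₁‖ ≤ √2 * ‖x₀ + x₁‖ := norm_add_norm_le_sqrt_two_mul
    (inner_eq_zero_of_disjoint_support (Set.disjoint_of_subset hx₀ hx₁ (disjoint_coe.mpr h₀₁)))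
  obtain ⟨hlow, hup⟩ := hA.of_support_subset ((card_union_le _ _).trans (by omega))
    (support_add_subset_union hx₀ hx₁)
  set u := x₀ + x₁
  set r := ∑ j ∈ J, y j
  set σ := ∑ j ∈ J, ‖y j‖
  have hσ : 0 ≤ σ := sum_nonneg fun j _ => norm_nonneg (y j)
  clear_value u r σ
  have hAu : ‖A u‖ ≤ √(1 + δ) * ‖u‖ := by
    refine (pow_le_pow_iff_left₀ (norm_nonneg _) (by positivity) two_ne_zero).mp ?_
    rwa [mul_pow, Real.sq_sqrt (by linarith)]
  have hexpand : ‖A u‖ ^ 2 =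
      RCLike.re (inner 𝕜 (A u) (A (u + r))) - RCLike.re (inner 𝕜 (A u) (A r)) := by
    rw [map_add, inner_add_right, map_add, inner_self_eq_norm_sq]
    ring
  have hmain : (1 - δ) * ‖u‖ * ‖u‖ ≤ (√(1 + δ) * ‖A (u + r)‖ + √2 * δ * σ) * ‖u‖ :=
    calc (1 - δ) * ‖u‖ * ‖u‖ ≤ ‖A u‖ ^ 2 := by linarith
      _ ≤ ‖A u‖ * ‖A (u + r)‖ + δ * (‖x₀‖ + ‖x₁‖) * σ := by
        linarith [re_inner_le_norm (𝕜 := 𝕜) (A u) (A (u + r))]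
      _ ≤ √(1 + δ) * ‖u‖ * ‖A (u + r)‖ + δ * (√2 * ‖u‖) * σ := by gcongr
      _ = (√(1 + δ) * ‖A (u + r)‖ + √2 * δ * σ) * ‖u‖ := by ring
  rcases (norm_nonneg u).eq_or_lt with h0 | hpos
  · rw [← h0, mul_zero]
    exact add_nonneg (by positivity) (mul_nonneg (by positivity) hσ)
  · exact le_of_mul_le_mul_right hmain hpos

end RIP

theorem sum_compl_norm_sub_le {ι E : Type*} [Fintype ι] [DecidableEq ι] [SeminormedAddCommGroup E]
    {a b : ι → E} (hab : ∑ i, ‖a i‖ ≤ ∑ i, ‖b i‖) (U : Finset ι) :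
    ∑ i ∈ Uᶜ, ‖a i - b i‖ ≤ ∑ i ∈ U, ‖a i - b i‖ + 2 * ∑ i ∈ Uᶜ, ‖b i‖ := by
  have hU : ∑ i ∈ U, ‖b i‖ ≤ ∑ i ∈ U, ‖a i‖ + ∑ i ∈ U, ‖a i - b i‖ := by
    rw [← sum_add_distrib]
    exact sum_le_sum fun i _ => by simpa [norm_sub_rev] using norm_le_norm_add_norm_sub' (b i) (a i)
  have hUc : ∑ i ∈ Uᶜ, ‖a i - b i‖ ≤ ∑ i ∈ Uᶜ, ‖a i‖ + ∑ i ∈ Uᶜ, ‖b i‖ := by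
    rw [← sum_add_distrib]
    exact sum_le_sum fun i _ => norm_sub_le (a i) (b i)
  rw [← sum_add_sum_compl U, ← sum_add_sum_compl U (fun i => ‖b i‖)] at hab
  linarith

/-- With `X = ‖h_{Λ ∪ T₁}‖₂`, `σ = ∑_{j ≥ 2} ‖h_{T_j}‖₂`, `a = ‖Φh‖₂`, `e = ε₁ / √S`, `n = ‖h‖₂`. -/
theorem le_recovery_bound {δ ε e X σ a n : ℝ} (hδ0 : 0 ≤ δ) (hδ : δ < √2 - 1)
    (hhead : (1 - δ) * X ≤ √(1 + δ) * a + √2 * δ * σ) (ha : a ≤ 2 * ε)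
    (htail : σ ≤ X + 2 * e) (hn : n ≤ X + σ) :
    n ≤ 2 * (1 + (√2 - 1) * δ) / (1 - (√2 + 1) * δ) * e
      + 4 * √(1 + δ) / (1 - (√2 + 1) * δ) * ε := by
  have h2 : √2 * √2 = 2 := Real.mul_self_sqrt zero_le_two
  have hD : 0 < 1 - (√2 + 1) * δ := by nlinarith
  have hβa : √(1 + δ) * a ≤ √(1 + δ) * (2 * ε) := by gcongr
  have hX : (1 - (√2 + 1) * δ) * X ≤ 2 * √(1 + δ) * ε + 2 * √2 * δ * e := by
    nlinarith [mul_le_mul_of_nonneg_left htail (mul_nonneg (Real.sqrt_nonneg 2) hδ0)]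
  rw [div_mul_eq_mul_div, div_mul_eq_mul_div, ← add_div, le_div_iff₀ hD]
  nlinarith

theorem IsRIP.norm_le_of_cone {𝕜 ι F : Type*} [RCLike 𝕜] [Fintype ι] [DecidableEq ι]
    [NormedAddCommGroup F] [InnerProductSpace 𝕜 F] {A : EuclideanSpace 𝕜 ι →ₗ[𝕜] F} {S : ℕ}
    {δ : ℝ} (hA : IsRIP A (2 * S) δ) (hδ0 : 0 ≤ δ) (hδ : δ < √2 - 1) (hS : 0 < S)
    {Λ : Finset ι} (hΛ : #Λ ≤ S) {x : EuclideanSpace 𝕜 ι} {ε₁ ε₂ : ℝ}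
    (hcone : ∑ i ∈ Λᶜ, ‖x i‖ ≤ ∑ i ∈ Λ, ‖x i‖ + 2 * ε₁) (htube : ‖A x‖ ≤ 2 * ε₂) :
    ‖x‖ ≤ 2 * (1 + (√2 - 1) * δ) / (1 - (√2 + 1) * δ) * (ε₁ / √(S : ℝ))
      + 4 * √(1 + δ) / (1 - (√2 + 1) * δ) * ε₂ := by
  set T := block x Λᶜ S
  have hdecomp := eq_indicator_add_sum_indicator_block x S hS Λ
  have hΛT : ∀ j, Disjoint Λ (T j) := fun j =>
    disjoint_compl_right.mono_right (block_subset x Λᶜ S j)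
  have hhead := hA.one_sub_mul_norm_add_le hδ0 hΛ (card_block_le x Λᶜ S 0)
    (fun j => card_block_le x Λᶜ S (j + 1)) (hΛT 0) (fun j => hΛT (j + 1))
    (fun j => pairwise_disjoint_block x Λᶜ S (Nat.zero_ne_add_one j)) (support_indicator_subset _ x)
    (support_indicator_subset _ x) (fun j => support_indicator_subset _ x) (range #Λᶜ)
  rw [← hdecomp] at hhead
  have hnorm : ‖x‖ ≤ ‖indicator Λ x + indicator (T 0) x‖ +
      ∑ j ∈ range #Λᶜ, ‖indicator (T (j + 1)) x‖ := by
    conv_lhs => rw [hdecomp]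
    exact (norm_add_le _ _).trans (add_le_add_right (norm_sum_le _ _) _)
  exact le_recovery_bound hδ0 hδ hhead htube
    (sum_norm_indicator_block_succ_le_of_cone x S hS hΛ hcone _) hnorm

end CompressedSensing

end

open CompressedSensing

theorem stmt1_general
    (K N S : ℕ) (hS : 0 < S)
    (Φ : Matrix (Fin K) (Fin N) ℂ) (δ : ℝ) (hδ0 : 0 ≤ δ)
    (hRIP : ∀ θ : Fin N → ℂ,
      (Finset.univ.filter fun i => θ i ≠ 0).card ≤ 2 * S →
        (1 - δ) * (∑ i, ‖θ i‖ ^ 2) ≤ (∑ k, ‖Φ.mulVec θ k‖ ^ 2) ∧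
        (∑ k, ‖Φ.mulVec θ k‖ ^ 2) ≤ (1 + δ) * (∑ i, ‖θ i‖ ^ 2))
    (hδ : δ < Real.sqrt 2 - 1)
    (α : Fin K → ℂ) (ε₂ : ℝ)
    (θs : Fin N → ℂ)
    (hθs : Real.sqrt (∑ k, ‖(Φ.mulVec θs - α) k‖ ^ 2) ≤ ε₂)
    (θ₁ : Fin N → ℂ)
    (hθ₁feas : Real.sqrt (∑ k, ‖(Φ.mulVec θ₁ - α) k‖ ^ 2) ≤ ε₂)
    (hθ₁min : ∀ θ : Fin N → ℂ,
      Real.sqrt (∑ k, ‖(Φ.mulVec θ - α) k‖ ^ 2) ≤ ε₂ →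
        (∑ i, ‖θ₁ i‖) ≤ (∑ i, ‖θ i‖))
    -- `θS` is `θs` with all but its `S` largest-magnitude components set to `0`
    (θS : Fin N → ℂ) (Λ : Finset (Fin N)) (hΛcard : Λ.card = S)
    (hθSon : ∀ i ∈ Λ, θS i = θs i) (hθSoff : ∀ i ∉ Λ, θS i = 0)
    (ε₁ : ℝ) (hε₁ : ε₁ = ∑ i, ‖θs i - θS i‖) :
    Real.sqrt (∑ i, ‖θ₁ i - θs i‖ ^ 2) ≤
      (2 * (1 + (Real.sqrt 2 - 1) * δ) / (1 - (Real.sqrt 2 + 1) * δ))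
          * ε₁ / Real.sqrt S
        + (4 * Real.sqrt (1 + δ) / (1 - (Real.sqrt 2 + 1) * δ)) * ε₂ := by
  set A := Matrix.toLpLin 2 2 Φ
  set h : EuclideanSpace ℂ (Fin N) := WithLp.toLp 2 (θ₁ - θs)
  have hA : IsRIP A (2 * S) δ := fun x hx => by
    simpa [A, EuclideanSpace.norm_sq_eq] using hRIP x.ofLp hx
  have hresid : ∀ θ : Fin N → ℂ,
      √(∑ k, ‖(Φ.mulVec θ - α) k‖ ^ 2) = ‖A (WithLp.toLp 2 θ) - WithLp.toLp 2 α‖ := fun θ => by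
    rw [EuclideanSpace.norm_eq]; simp [A]
  have htube : ‖A h‖ ≤ 2 * ε₂ := by
    rw [show h = WithLp.toLp 2 θ₁ - WithLp.toLp 2 θs from rfl, map_sub]
    linarith [norm_sub_le_norm_sub_add_norm_sub (A (WithLp.toLp 2 θ₁)) (WithLp.toLp 2 α)
      (A (WithLp.toLp 2 θs)), norm_sub_rev (WithLp.toLp 2 α) (A (WithLp.toLp 2 θs)),
      hresid θ₁ ▸ hθ₁feas, hresid θs ▸ hθs]
  have hε₁' : ε₁ = ∑ i ∈ Λᶜ, ‖θs i‖ := by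
    rw [hε₁, ← sum_add_sum_compl Λ, sum_eq_zero fun i hi => by simp [hθSon i hi], zero_add]
    exact sum_congr rfl fun i hi => by simp [hθSoff i (mem_compl.mp hi)]
  have hcone : ∑ i ∈ Λᶜ, ‖h i‖ ≤ ∑ i ∈ Λ, ‖h i‖ + 2 * ε₁ :=
    hε₁' ▸ sum_compl_norm_sub_le (hθ₁min θs hθs) Λ
  have hlhs : √(∑ i, ‖θ₁ i - θs i‖ ^ 2) = ‖h‖ := by
    rw [EuclideanSpace.norm_eq]; rfl
  rw [hlhs, mul_div_assoc]
  exact hA.norm_le_of_cone hδ0 hδ hS hΛcard.le hcone htube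

/-- RIP-based recovery estimate (underlying Lemma 2): if `Φ` satisfies the
restricted isometry property of order `2S` with constant `δ < √2 − 1`, and
`θ₁` minimizes the ℓ¹ norm subject to `‖Φθ − α‖₂ ≤ ε₂`, then
`‖θ₁ − θ*‖₂ ≤ C₁ ε₁ / √S + C₂ ε₂` where `ε₁ = ‖θ* − θ*_[S]‖₁`. -/
theorem stmt1
    (K N S : ℕ) (hS : 0 < S) (h2S : 2 * S ≤ N)
    (Φ : Matrix (Fin K) (Fin N) ℂ) (δ : ℝ) (hδ0 : 0 ≤ δ)
    (hRIP : ∀ θ : Fin N → ℂ,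
      (Finset.univ.filter fun i => θ i ≠ 0).card ≤ 2 * S →
        (1 - δ) * (∑ i, ‖θ i‖ ^ 2) ≤ (∑ k, ‖Φ.mulVec θ k‖ ^ 2) ∧
        (∑ k, ‖Φ.mulVec θ k‖ ^ 2) ≤ (1 + δ) * (∑ i, ‖θ i‖ ^ 2))
    (hδ : δ < Real.sqrt 2 - 1)
    (α : Fin K → ℂ) (ε₂ : ℝ) (hε₂ : 0 ≤ ε₂)
    (θs : Fin N → ℂ)
    (hθs : Real.sqrt (∑ k, ‖(Φ.mulVec θs - α) k‖ ^ 2) ≤ ε₂)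
    (θ₁ : Fin N → ℂ)
    (hθ₁feas : Real.sqrt (∑ k, ‖(Φ.mulVec θ₁ - α) k‖ ^ 2) ≤ ε₂)
    (hθ₁min : ∀ θ : Fin N → ℂ,
      Real.sqrt (∑ k, ‖(Φ.mulVec θ - α) k‖ ^ 2) ≤ ε₂ →
        (∑ i, ‖θ₁ i‖) ≤ (∑ i, ‖θ i‖))
    -- `θS` is `θs` with all but its `S` largest-magnitude components set to `0`
    (θS : Fin N → ℂ) (Λ : Finset (Fin N)) (hΛcard : Λ.card = S)
    (hθSon : ∀ i ∈ Λ, θS i = θs i) (hθSoff : ∀ i ∉ Λ, θS i = 0)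
    (hLargest : ∀ i ∈ Λ, ∀ j ∉ Λ, ‖θs j‖ ≤ ‖θs i‖)
    (ε₁ : ℝ) (hε₁ : ε₁ = ∑ i, ‖θs i - θS i‖) :
    Real.sqrt (∑ i, ‖θ₁ i - θs i‖ ^ 2) ≤
      (2 * (1 + (Real.sqrt 2 - 1) * δ) / (1 - (Real.sqrt 2 + 1) * δ))
          * ε₁ / Real.sqrt S
        + (4 * Real.sqrt (1 + δ) / (1 - (Real.sqrt 2 + 1) * δ)) * ε₂ :=
  stmt1_general K N S hS Φ δ hδ0 hRIP hδ α ε₂ θs hθs θ₁ hθ₁feas hθ₁min θS Λ hΛcard hθSon hθSoff ε₁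
    hε₁
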